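/- Let n ≥ 3, d ≥ 2, and let τ(p) = ρ_{A₁B₁}(p) ⊗ ⊗_{i=2}^{n−1} φ⁺_{A_iB_i} be the n-partite pair-entangled-network state on the star graph with center party A = A₁⋯A_{n−1} and leaf parties B₁,…,B_{n−1}, where the edge A₁B₁ carries the d-dimensional isotropic state with visibility p and every other edge A_iB_i carries the projector onto the d-dimensional maximally entangled state |φ⁺_d⟩. If p > 1/(d+1), then τ(p) is genuinely multipartite entangled. -/

import Mathlib

open scoped BigOperators ComplexOrder

noncomputable section

/-- Projector onto the `d`-dimensional maximally entangled state
`|φ⁺_d⟩ = (1/√d) ∑ᵢ |ii⟩`, as a matrix on `ℂ^d ⊗ ℂ^d`. -/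
def phiPlus (d : ℕ) : Matrix (Fin d × Fin d) (Fin d × Fin d) ℂ :=
  fun x y => if x.1 = x.2 ∧ y.1 = y.2 then (1 / (d : ℂ)) else 0

/-- The `d`-dimensional isotropic state with visibility `p`:
`ρ(p) = p φ⁺_d + (1-p) 𝟙/d²`. -/
def iso (d : ℕ) (p : ℝ) : Matrix (Fin d × Fin d) (Fin d × Fin d) ℂ :=
  (p : ℂ) • phiPlus d +
    (((1 - p) / (d : ℝ) ^ 2 : ℝ) : ℂ) • (1 : Matrix (Fin d × Fin d) (Fin d × Fin d) ℂ)

/-- The (possibly unnormalized) projector `|ψ⟩⟨ψ|` onto a vector `ψ`. -/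
def vecProj {ι : Type} (ψ : ι → ℂ) : Matrix ι ι ℂ :=
  fun i j => ψ i * (starRingEnd ℂ) (ψ j)

/-- A multipartite pure-state vector (parties indexed by `ι`, party `i` holding the
finite-dimensional space with basis `H i`) factors as a tensor product across the
bipartition `M | Mᶜ`: `ψ = f ⊗ g` where `f` depends only on the coordinates of the
parties in `M` and `g` only on those of the parties outside `M`. -/
def FactorsAcross {ι : Type} {H : ι → Type} (M : Finset ι)
    (ψ : ((i : ι) → H i) → ℂ) : Prop :=
  ∃ f g : ((i : ι) → H i) → ℂ,
    (∀ x, ψ x = f x * g x) ∧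
    (∀ x y, (∀ i ∈ M, x i = y i) → f x = f y) ∧
    (∀ x y, (∀ i, i ∉ M → x i = y i) → g x = g y)

/-- A multipartite pure-state vector is biseparable: it factors across some nonempty
proper bipartition of the parties. -/
def PureBiseparable {ι : Type} [Fintype ι] {H : ι → Type}
    (ψ : ((i : ι) → H i) → ℂ) : Prop :=
  ∃ M : Finset ι, M.Nonempty ∧ M ≠ Finset.univ ∧ FactorsAcross M ψ

/-- A multipartite density matrix is biseparable if it is a finite convex combination
of projectors onto normalized biseparable pure states.  A state which is not
biseparable is genuinely multipartite entangled (GME). -/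
def Biseparable {ι : Type} [Fintype ι] [DecidableEq ι] {H : ι → Type}
    [∀ i, Fintype (H i)]
    (ρ : Matrix ((i : ι) → H i) ((i : ι) → H i) ℂ) : Prop :=
  ∃ (k : ℕ) (w : Fin k → ℝ) (ψ : Fin k → ((i : ι) → H i) → ℂ),
    (∀ t, 0 ≤ w t) ∧ (∑ t, w t = 1) ∧
    (∀ t, PureBiseparable (ψ t)) ∧
    (∀ t, ∑ x, Complex.normSq (ψ t x) = 1) ∧
    ρ = ∑ t, (w t : ℂ) • vecProj (ψ t)

/-- Local Hilbert-space basis for the star network with `m + 1` leaves: the central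
party (`none`) holds `m + 1` qudits, one for each edge, while each leaf party `some j`
holds a single qudit. -/
def starH (d m : ℕ) : Option (Fin (m + 1)) → Type
  | none => Fin (m + 1) → Fin d
  | some _ => Fin d

instance starH.fintype (d m : ℕ) : ∀ i, Fintype (starH d m i)
  | none => inferInstanceAs (Fintype (Fin (m + 1) → Fin d))
  | some _ => inferInstanceAs (Fintype (Fin d))

instance starH.decEq (d m : ℕ) : ∀ i, DecidableEq (starH d m i)
  | none => inferInstanceAs (DecidableEq (Fin (m + 1) → Fin d))
  | some _ => inferInstanceAs (DecidableEq (Fin d))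

/-- The `(m+2)`-partite star PEN state `τ(p)`: the edge between the center and leaf `0`
carries the `d`-dimensional isotropic state with visibility `p`, and each edge between
the center and a leaf `j ≠ 0` carries the projector onto the `d`-dimensional maximally
entangled state. -/
def tauStar (d m : ℕ) (p : ℝ) :
    Matrix ((i : Option (Fin (m + 1))) → starH d m i)
           ((i : Option (Fin (m + 1))) → starH d m i) ℂ :=
  fun u v => ∏ j : Fin (m + 1),
    (if j = 0 then iso d p else phiPlus d)
      (u none j, u (some j)) (v none j, v (some j))


/-!
Test `τ(p)` against `Φ = ∑ₐ |starDiag a⟩`, in which the center holds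
`a : Fin (m+1) → Fin d` and leaf `j` holds `a j`: this is the tensor product of the
unnormalized vectors `√d |φ⁺_d⟩` on all edges, so `⟨Φ|τ(p)|Φ⟩` factorizes over the edges
as `(p d + (1 - p) / d) d^m`.
For a normalized product vector `F ⊗ G` across a cut `M | Mᶜ` with the center in `Mᶜ` and
some leaf `j` in `M`, a configuration `a` is determined by its restriction to `Mᶜ`, and also
by its restriction to `M` together with the `m` coordinates `a k`, `k ≠ j`; Cauchy–Schwarz
then bounds `|⟨Φ|F ⊗ G⟩|²` by `d^m`. Hence every biseparable state has overlap at most `d^m`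
with `Φ`, while for `d ≥ 2` the condition `p > 1/(d+1)` says exactly `p d + (1 - p) / d > 1`.
-/

open Finset Function Complex

section Sums

variable {α β κ : Type*} [Fintype α] [Fintype β] [Fintype κ]

lemma Fintype.sum_comp_le_sum_of_injective {f : β → ℝ} (hf : ∀ b, 0 ≤ f b) {u : α → β}
    (hu : Injective u) : ∑ a, f (u a) ≤ ∑ b, f b := by
  classical
  rw [← Finset.sum_image fun a _ b _ h => hu h]
  exact sum_le_sum_of_subset_of_nonneg (subset_univ _) fun b _ _ => hf b

lemma Fintype.sum_comp_le_card_mul_sum {f : β → ℝ} (hf : ∀ b, 0 ≤ f b) {u : α → β}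
    {c : α → κ} (huc : Injective fun a => (u a, c a)) :
    ∑ a, f (u a) ≤ Fintype.card κ * ∑ b, f b :=
  calc ∑ a, f (u a) ≤ ∑ x : β × κ, f x.1 :=
        Fintype.sum_comp_le_sum_of_injective (fun x => hf x.1) huc
    _ = Fintype.card κ * ∑ b, f b := by simp [Fintype.sum_prod_type, Finset.mul_sum]

lemma normSq_sum_mul_le (z w : α → ℂ) :
    normSq (∑ a, z a * w a) ≤ (∑ a, normSq (z a)) * ∑ a, normSq (w a) :=
  calc normSq (∑ a, z a * w a) = ‖∑ a, z a * w a‖ ^ 2 := (Complex.sq_norm _).symm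
    _ ≤ (∑ a, ‖z a‖ * ‖w a‖) ^ 2 := by
        gcongr
        exact (norm_sum_le _ _).trans_eq (by simp)
    _ ≤ (∑ a, ‖z a‖ ^ 2) * ∑ a, ‖w a‖ ^ 2 := sum_mul_sq_le_sq_mul_sq _ _ _
    _ = (∑ a, normSq (z a)) * ∑ a, normSq (w a) := by simp only [Complex.sq_norm]

lemma normSq_sum_mul_comp_le {X Y : Type*} [Fintype X] [Fintype Y] (F : X → ℂ) (G : Y → ℂ)
    {u : α → X} {v : α → Y} {c : α → κ} (huc : Injective fun a => (u a, c a))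
    (hv : Injective v) :
    normSq (∑ a, F (u a) * G (v a)) ≤
      Fintype.card κ * ((∑ x, normSq (F x)) * ∑ y, normSq (G y)) :=
  calc normSq (∑ a, F (u a) * G (v a))
        ≤ (∑ a, normSq (F (u a))) * ∑ a, normSq (G (v a)) := normSq_sum_mul_le _ _
    _ ≤ (Fintype.card κ * ∑ x, normSq (F x)) * ∑ y, normSq (G y) := by
        refine mul_le_mul ?_ ?_ (sum_nonneg fun _ _ => normSq_nonneg _)
          (mul_nonneg (Nat.cast_nonneg _) (sum_nonneg fun _ _ => normSq_nonneg _))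
        · exact Fintype.sum_comp_le_card_mul_sum (fun _ => normSq_nonneg _) huc
        · exact Fintype.sum_comp_le_sum_of_injective (fun _ => normSq_nonneg _) hv
    _ = _ := mul_assoc _ _ _

end Sums

section Factorization

variable {ι : Type} [DecidableEq ι] {H : ι → Type} {M : Finset ι}
  {ψ : ((i : ι) → H i) → ℂ}

lemma FactorsAcross.compl [Fintype ι] (h : FactorsAcross M ψ) : FactorsAcross Mᶜ ψ := by
  obtain ⟨f, g, hfg, hf, hg⟩ := h
  exact ⟨g, f, fun x => (hfg x).trans (mul_comm _ _),
    fun x y hxy => hg x y fun i hi => hxy i (mem_compl.2 hi),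
    fun x y hxy => hf x y fun i hi => hxy i (by simpa using hi)⟩

lemma PureBiseparable.exists_factorsAcross_notMem [Fintype ι] (h : PureBiseparable ψ)
    (i₀ : ι) :
    ∃ M : Finset ι, i₀ ∉ M ∧ M.Nonempty ∧ FactorsAcross M ψ := by
  obtain ⟨M, hne, huniv, hM⟩ := h
  by_cases hi₀ : i₀ ∈ M
  · refine ⟨Mᶜ, by simpa using hi₀, ?_, hM.compl⟩
    rwa [nonempty_iff_ne_empty, Ne, compl_eq_empty_iff]
  · exact ⟨M, hi₀, hne, hM⟩

lemma FactorsAcross.exists_eq_mul (h : FactorsAcross M ψ) :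
    ∃ (F : ((i : {i // i ∈ M}) → H i) → ℂ) (G : ((i : {i // i ∉ M}) → H i) → ℂ),
      ∀ x, ψ x = F (fun i => x i) * G (fun i => x i) := by
  rcases isEmpty_or_nonempty ((i : ι) → H i) with _ | hne
  · exact ⟨0, 0, fun x => isEmptyElim x⟩
  obtain ⟨x₀⟩ := hne
  obtain ⟨f, g, hfg, hf, hg⟩ := h
  let e := Equiv.piEquivPiSubtypeProd (· ∈ M) H
  refine ⟨fun u => f (e.symm (u, (e x₀).2)), fun v => g (e.symm ((e x₀).1, v)), fun x => ?_⟩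
  rw [hfg]
  congr 1
  · exact hf _ _ fun i hi => by simp [e, Equiv.piEquivPiSubtypeProd, hi]
  · exact hg _ _ fun i hi => by simp [e, Equiv.piEquivPiSubtypeProd, hi]

lemma sum_normSq_mul_restrict [Fintype ι] [∀ i, Fintype (H i)] (M : Finset ι)
    (F : ((i : {i // i ∈ M}) → H i) → ℂ) (G : ((i : {i // i ∉ M}) → H i) → ℂ) :
    ∑ x : (i : ι) → H i, normSq (F (fun i => x i) * G (fun i => x i)) =
      (∑ u, normSq (F u)) * ∑ v, normSq (G v) := by
  rw [sum_mul_sum, ← Fintype.sum_prod_type']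
  exact Fintype.sum_equiv (Equiv.piEquivPiSubtypeProd (· ∈ M) H) _ _ fun x => normSq_mul _ _

end Factorization

lemma sum_sum_vecProj_apply_comp {ι α : Type} [Fintype α] (ψ : ι → ℂ) (φ : α → ι) :
    ∑ a, ∑ b, vecProj ψ (φ a) (φ b) = normSq (∑ a, ψ (φ a)) := by
  rw [← mul_conj, map_sum, sum_mul_sum]
  rfl

lemma sum_sum_sum_smul_vecProj_apply_comp {ι α : Type} [Fintype α] {k : ℕ} (w : Fin k → ℝ)
    (ψ : Fin k → ι → ℂ) (φ : α → ι) :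
    ∑ a, ∑ b, (∑ t, (w t : ℂ) • vecProj (ψ t)) (φ a) (φ b) =
      ((∑ t, w t * normSq (∑ a, ψ t (φ a)) : ℝ) : ℂ) := by
  calc ∑ a, ∑ b, (∑ t, (w t : ℂ) • vecProj (ψ t)) (φ a) (φ b)
      = ∑ t, (w t : ℂ) * ∑ a, ∑ b, vecProj (ψ t) (φ a) (φ b) := by
        simp only [Matrix.sum_apply, Matrix.smul_apply, smul_eq_mul, mul_sum]
        conv_lhs => enter [2, a]; rw [sum_comm]
        rw [sum_comm]
    _ = ((∑ t, w t * normSq (∑ a, ψ t (φ a)) : ℝ) : ℂ) := by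
        simp [sum_sum_vecProj_apply_comp]

def starDiag (d m : ℕ) (a : Fin (m + 1) → Fin d) : (i : Option (Fin (m + 1))) → starH d m i
  | none => a
  | some j => a j

section Star

variable {d m : ℕ}

lemma starDiag_restrict_injective {M : Finset (Option (Fin (m + 1)))} (hM : none ∉ M) :
    Injective fun a => fun i : {i // i ∉ M} => starDiag d m a i :=
  fun _ _ hab => congrFun hab ⟨none, hM⟩

lemma starDiag_restrict_prod_injective {M : Finset (Option (Fin (m + 1)))} {j : Fin (m + 1)}
    (hj : some j ∈ M) :
    Injective fun a =>
      ((fun i : {i // i ∈ M} => starDiag d m a i), fun k => a (j.succAbove k)) := by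
  intro a b hab
  simp only [Prod.mk.injEq] at hab
  funext i
  rcases eq_or_ne i j with rfl | hij
  · exact congrFun hab.1 ⟨some i, hj⟩
  · obtain ⟨k, rfl⟩ := Fin.exists_succAbove_eq hij
    exact congrFun hab.2 k

lemma PureBiseparable.normSq_sum_starDiag_le
    {ψ : ((i : Option (Fin (m + 1))) → starH d m i) → ℂ} (hψ : PureBiseparable ψ)
    (hnorm : ∑ x, normSq (ψ x) = 1) :
    normSq (∑ a, ψ (starDiag d m a)) ≤ (d : ℝ) ^ m := by
  obtain ⟨M, hnone, ⟨_, hj⟩, hM⟩ := hψ.exists_factorsAcross_notMem none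
  obtain ⟨j, rfl⟩ := Option.ne_none_iff_exists'.1 (ne_of_mem_of_not_mem hj hnone)
  obtain ⟨F, G, hFG⟩ := hM.exists_eq_mul
  rw [funext hFG, sum_normSq_mul_restrict] at hnorm
  calc normSq (∑ a, ψ (starDiag d m a))
      ≤ Fintype.card (Fin m → Fin d) * ((∑ u, normSq (F u)) * ∑ v, normSq (G v)) := by
        simp only [hFG]
        exact normSq_sum_mul_comp_le F G (starDiag_restrict_prod_injective hj)
          (starDiag_restrict_injective hnone)
    _ = (d : ℝ) ^ m := by simp [hnorm]

lemma sum_sum_prod_apply_eq_prod_sum_sum {ι X : Type} [Fintype ι] [DecidableEq ι] [Fintype X]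
    (K : ι → X → X → ℂ) :
    ∑ a : ι → X, ∑ b : ι → X, ∏ j, K j (a j) (b j) = ∏ j, ∑ x, ∑ y, K j x y := by
  simp only [Fintype.prod_sum]

lemma sum_sum_phiPlus_diag (hd : d ≠ 0) :
    ∑ x : Fin d, ∑ y : Fin d, phiPlus d (x, x) (y, y) = d := by
  have : (d : ℂ) ≠ 0 := by exact_mod_cast hd
  simp only [phiPlus, and_self, ↓reduceIte, one_div, sum_const, card_univ, Fintype.card_fin,
    nsmul_eq_mul]
  field_simp

lemma sum_sum_iso_diag (hd : d ≠ 0) (p : ℝ) :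
    ∑ x : Fin d, ∑ y : Fin d, iso d p (x, x) (y, y) = ((p * d + (1 - p) / d : ℝ) : ℂ) := by
  have : (d : ℂ) ≠ 0 := by exact_mod_cast hd
  simp only [iso, Complex.coe_smul, ofReal_div, ofReal_sub, ofReal_one, ofReal_pow,
    ofReal_natCast, Matrix.add_apply, Matrix.smul_apply, phiPlus, and_self, ↓reduceIte, one_div,
    real_smul, Matrix.one_apply, Prod.mk.injEq, smul_eq_mul, mul_ite, mul_one, mul_zero,
    sum_add_distrib, sum_const, card_univ, Fintype.card_fin, nsmul_eq_mul, sum_ite_eq, mem_univ,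
    ofReal_add, ofReal_mul]
  field_simp

lemma sum_sum_tauStar_starDiag (hd : d ≠ 0) (p : ℝ) :
    ∑ a, ∑ b, tauStar d m p (starDiag d m a) (starDiag d m b) =
      (((p * d + (1 - p) / d) * d ^ m : ℝ) : ℂ) := by
  have hτ : ∀ a b, tauStar d m p (starDiag d m a) (starDiag d m b) =
      ∏ j, (if j = 0 then iso d p else phiPlus d) (a j, a j) (b j, b j) := fun _ _ => rfl
  simp only [hτ]
  rw [sum_sum_prod_apply_eq_prod_sum_sum fun (j : Fin (m + 1)) (x y : Fin d) =>
      (if j = 0 then iso d p else phiPlus d) (x, x) (y, y), Fin.prod_univ_succ]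
  simp only [if_pos, Fin.succ_ne_zero, if_false, sum_sum_iso_diag hd, sum_sum_phiPlus_diag hd,
    prod_const, card_univ, Fintype.card_fin]
  push_cast
  ring

end Star

lemma one_lt_mul_add_one_sub_div {d p : ℝ} (hd : 1 < d) (hp : 1 / (d + 1) < p) :
    1 < p * d + (1 - p) / d := by
  have hpd : 1 < p * (d + 1) := by rwa [div_lt_iff₀ (by linarith)] at hp
  have key : p * d + (1 - p) / d - 1 = (p * (d + 1) - 1) * (d - 1) / d := by
    field_simp
    ring
  have : 0 < (p * (d + 1) - 1) * (d - 1) / d := by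
    apply div_pos (mul_pos _ _) <;> linarith
  linarith

theorem tauStar_GME_general (d m : ℕ) (hd : 2 ≤ d) (p : ℝ)
    (hp : 1 / ((d : ℝ) + 1) < p) :
    ¬ Biseparable (tauStar d m p) := by
  rintro ⟨k, w, ψ, hw, hw1, hsep, hnorm, hτ⟩
  have hd1 : (1 : ℝ) < d := by exact_mod_cast hd
  have hoverlap : (p * d + (1 - p) / d) * d ^ m =
      ∑ t, w t * normSq (∑ a, ψ t (starDiag d m a)) := by
    have := sum_sum_sum_smul_vecProj_apply_comp w ψ (starDiag d m)
    rw [← hτ, sum_sum_tauStar_starDiag (by omega)] at this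
    exact_mod_cast this
  have hbisep : ∑ t, w t * normSq (∑ a, ψ t (starDiag d m a)) ≤ d ^ m :=
    calc ∑ t, w t * normSq (∑ a, ψ t (starDiag d m a)) ≤ ∑ t, w t * (d : ℝ) ^ m :=
          sum_le_sum fun t _ =>
            mul_le_mul_of_nonneg_left ((hsep t).normSq_sum_starDiag_le (hnorm t)) (hw t)
      _ = d ^ m := by rw [← sum_mul, hw1, one_mul]
  have hdm : (0 : ℝ) < d ^ m := by positivity
  linarith [mul_lt_mul_of_pos_right (one_lt_mul_add_one_sub_div hd1 hp) hdm]

/-- **Lemma (GME of the star network with one isotropic edge).**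
For `n = m + 2 ≥ 3` parties and `d ≥ 2`, if the isotropic edge is entangled, i.e.
`p > 1/(d+1)`, then the star PEN state `τ(p)` is genuinely multipartite entangled. -/
theorem tauStar_GME (d m : ℕ) (hd : 2 ≤ d) (hm : 1 ≤ m) (p : ℝ) (hp1 : p ≤ 1)
    (hp : 1 / ((d : ℝ) + 1) < p) :
    ¬ Biseparable (tauStar d m p) :=
  tauStar_GME_general d m hd p hp
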